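/- arXiv:1306.6070 — 5 statements merged into one kernel-verified Lean document; each statement's English description precedes it below -/
import Mathlib

section
/- Let Ω ⊂ ℝ^d be compact, let μ be a finite Borel measure on Ω that is singular with respect to the Lebesgue measure, and let (μ_n) be a sequence of finite Borel measures on Ω converging weakly to μ (i.e., ∫ f dμ_n → ∫ f dμ for every bounded continuous f). Then there exists a sequence of open sets (A_n) in ℝ^d such that (i) the Lebesgue measure of A_n tends to 0, and (ii) μ_n(Ω \ A_n) tends to 0. -/
open MeasureTheory Filter Topology
open scoped ENNReal

/-!
A measure singular to an outer regular `ν` lives, for every `ε > 0`, outside a closed set whose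
complement is an open set of `ν`-measure `< ε`. By the portmanteau theorem the `μₙ`-mass of that
closed set tends to `0`; a diagonal choice of `ε` along `n` yields the open sets `Aₙ`.
-/

theorem Filter.exists_tendsto_atTop_tendsto_diag {α : Type*} {l : Filter α}
    [l.IsCountablyGenerated] {u : ℕ → ℕ → α} (hu : ∀ k, Tendsto (u k) atTop l) :
    ∃ K : ℕ → ℕ, Tendsto K atTop atTop ∧ Tendsto (fun n => u (K n) n) atTop l := by
  obtain ⟨s, hs⟩ := l.exists_antitone_basis
  choose N hN using fun k => eventually_atTop.mp ((hu k).eventually (hs.mem k))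
  set K : ℕ → ℕ := fun n => Nat.findGreatest (fun k => N k ≤ n) n
  have le_K {k n : ℕ} (hkn : k ≤ n) (hNk : N k ≤ n) : k ≤ K n := Nat.le_findGreatest hkn hNk
  have N_K_le {k n : ℕ} (hkn : k ≤ n) (hNk : N k ≤ n) : N (K n) ≤ n :=
    Nat.findGreatest_spec (P := fun k => N k ≤ n) hkn hNk
  refine ⟨K, tendsto_atTop_atTop.mpr fun k => ⟨max k (N k), fun n hn =>
    le_K (le_of_max_le_left hn) (le_of_max_le_right hn)⟩, ?_⟩
  refine hs.1.tendsto_right_iff.mpr fun k _ => ?_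
  filter_upwards [eventually_ge_atTop k, eventually_ge_atTop (N k)] with n hkn hNk
  exact hs.antitone (le_K hkn hNk) (hN _ _ (N_K_le hkn hNk))

theorem MeasureTheory.Measure.MutuallySingular.exists_isOpen_measure_lt_measure_compl_eq_zero
    {X : Type*} [TopologicalSpace X] [MeasurableSpace X] {μ ν : Measure X} [ν.OuterRegular]
    (h : μ ⟂ₘ ν) {ε : ℝ≥0∞} (hε : ε ≠ 0) : ∃ U, IsOpen U ∧ ν U < ε ∧ μ Uᶜ = 0 := by
  obtain ⟨s, -, hμs, hνs⟩ := h
  obtain ⟨U, hsU, hU, hνU⟩ := Set.exists_isOpen_lt_of_lt sᶜ ε (by rwa [hνs, pos_iff_ne_zero])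
  exact ⟨U, hU, hνU, measure_mono_null (Set.compl_subset_comm.mp hsU) hμs⟩

namespace MeasureTheory.FiniteMeasure

variable {X : Type*} [TopologicalSpace X] [MeasurableSpace X] [OpensMeasurableSpace X]
  [HasOuterApproxClosed X]

theorem tendsto_measure_of_isClosed_of_measure_eq_zero {ι : Type*} {L : Filter ι}
    {μ : FiniteMeasure X} {μs : ι → FiniteMeasure X} (h : Tendsto μs L (𝓝 μ)) {F : Set X}
    (hF : IsClosed F) (hμF : (μ : Measure X) F = 0) :
    Tendsto (fun i => (μs i : Measure X) F) L (𝓝 0) :=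
  tendsto_of_le_liminf_of_limsup_le (by simp)
    ((limsup_measure_closed_le_of_tendsto h hF).trans hμF.le)

theorem exists_isOpen_tendsto_measure_compl_of_mutuallySingular {μ : FiniteMeasure X}
    {μs : ℕ → FiniteMeasure X} (h : Tendsto μs atTop (𝓝 μ)) {ν : Measure X} [ν.OuterRegular]
    (hsing : (μ : Measure X) ⟂ₘ ν) :
    ∃ A : ℕ → Set X, (∀ n, IsOpen (A n)) ∧ Tendsto (fun n => ν (A n)) atTop (𝓝 0) ∧
      Tendsto (fun n => (μs n : Measure X) (A n)ᶜ) atTop (𝓝 0) := by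
  choose U hU hνU hμU using fun k : ℕ =>
    hsing.exists_isOpen_measure_lt_measure_compl_eq_zero
      (ENNReal.inv_ne_zero.mpr (ENNReal.natCast_ne_top k))
  obtain ⟨K, hK, hμsU⟩ := exists_tendsto_atTop_tendsto_diag fun k =>
    tendsto_measure_of_isClosed_of_measure_eq_zero h (hU k).isClosed_compl (hμU k)
  refine ⟨fun n => U (K n), fun n => hU (K n), ?_, hμsU⟩
  exact tendsto_of_tendsto_of_tendsto_of_le_of_le tendsto_const_nhds
    (ENNReal.tendsto_inv_nat_nhds_zero.comp hK) (fun _ => zero_le) fun n => (hνU (K n)).le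

end MeasureTheory.FiniteMeasure

theorem singular_weak_limit_concentration_general
    (d : ℕ) (Ω : Set (EuclideanSpace ℝ (Fin d)))
    (μ : Measure (EuclideanSpace ℝ (Fin d))) (hμfin : IsFiniteMeasure μ)
    (hsing : μ ⟂ₘ volume)
    (μs : ℕ → Measure (EuclideanSpace ℝ (Fin d)))
    (hμsfin : ∀ n, IsFiniteMeasure (μs n))
    (hweak : ∀ f : BoundedContinuousFunction (EuclideanSpace ℝ (Fin d)) ℝ,
      Tendsto (fun n => ∫ x, f x ∂(μs n)) atTop (𝓝 (∫ x, f x ∂μ))) :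
    ∃ A : ℕ → Set (EuclideanSpace ℝ (Fin d)),
      (∀ n, IsOpen (A n)) ∧
      Tendsto (fun n => volume (A n)) atTop (𝓝 0) ∧
      Tendsto (fun n => μs n (Ω \ A n)) atTop (𝓝 0) := by
  have hconv : Tendsto (β := FiniteMeasure (EuclideanSpace ℝ (Fin d)))
      (fun n => ⟨μs n, hμsfin n⟩) atTop (𝓝 ⟨μ, hμfin⟩) :=
    FiniteMeasure.tendsto_iff_forall_integral_tendsto.mpr hweak
  obtain ⟨A, hA, hvol, hcompl⟩ :=
    FiniteMeasure.exists_isOpen_tendsto_measure_compl_of_mutuallySingular hconv hsing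
  exact ⟨A, hA, hvol, tendsto_of_tendsto_of_tendsto_of_le_of_le tendsto_const_nhds hcompl
    (fun _ => zero_le) fun n => measure_mono fun _ hx => hx.2⟩

/-- If `μ` is a finite Borel measure on a compact `Ω ⊆ ℝ^d`, singular with
respect to Lebesgue measure, and `μ_n ⇀ μ` weakly (testing against bounded continuous
functions), then there are open sets `A_n` with `|A_n| → 0` and `μ_n(Ω \ A_n) → 0`. -/
theorem singular_weak_limit_concentration
    (d : ℕ) (Ω : Set (EuclideanSpace ℝ (Fin d))) (hΩ : IsCompact Ω)
    (μ : Measure (EuclideanSpace ℝ (Fin d))) (hμfin : IsFiniteMeasure μ)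
    (hμΩ : μ Ωᶜ = 0) (hsing : μ ⟂ₘ volume)
    (μs : ℕ → Measure (EuclideanSpace ℝ (Fin d)))
    (hμsfin : ∀ n, IsFiniteMeasure (μs n))
    (hμsΩ : ∀ n, μs n Ωᶜ = 0)
    (hweak : ∀ f : BoundedContinuousFunction (EuclideanSpace ℝ (Fin d)) ℝ,
      Tendsto (fun n => ∫ x, f x ∂(μs n)) atTop (𝓝 (∫ x, f x ∂μ))) :
    ∃ A : ℕ → Set (EuclideanSpace ℝ (Fin d)),
      (∀ n, IsOpen (A n)) ∧
      Tendsto (fun n => volume (A n)) atTop (𝓝 0) ∧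
      Tendsto (fun n => μs n (Ω \ A n)) atTop (𝓝 0) :=
  singular_weak_limit_concentration_general d Ω μ hμfin hsing μs hμsfin hweak
end

section
/- Let Ω ⊂ ℝ^d be compact, x₀ ∈ Ω, p, q > 0; set s = p/d, α = s/(1+s), β = 1/(1+s). Let ρ : Ω → [0,∞) be integrable and let φ : Ω → (0,∞) be measurable with ∫_Ω φ dx < ∞, ∫_Ω ρ·φ^{−s} dx < ∞ and ∫_Ω |x−x₀|^q φ(x) dx < ∞. For small ε > 0 define μ_ε = ε^β·φ·(Lebesgue measure restricted to Ω) + (1 − ε^β∫_Ω φ dx)·δ_{x₀}, and define G_ε(μ) = ε^α ∫_Ω ρ(x)·u(x)^{−s} dx + ε^{−β} ∫_{Ω×Ω} |x−y|^q dμ(x) dμ(y), where u is the Radon–Nikodym derivative of μ with respect to Lebesgue measure. Then lim_{ε→0⁺} G_ε(μ_ε) = ∫_Ω [ ρ(x)·φ(x)^{−s} + 2·|x−x₀|^q·φ(x) ] dx. -/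
open MeasureTheory Filter Topology
open scoped ENNReal

/-! For small `ε` the recovery measure is `ε^β φ · Leb⌊Ω + c_ε δ_{x₀}` with `c_ε → 1`.
The Dirac part is singular to Lebesgue measure, so the density is `ε^β φ` on `Ω` and, since
`α = β s`, the local term equals `∫_Ω ρ φ^(-s)` for every such `ε`. Expanding the interaction
energy bilinearly, the Dirac–Dirac term vanishes, the absolutely continuous self-interaction is
`ε^(2β)` times a constant that is finite because `Ω` is bounded and `φ` integrable, and the two
cross terms are `ε^β c_ε ∫_Ω |x - x₀|^q φ` each. After the factor `ε^(-β)` only the cross terms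
survive as `ε → 0⁺`. -/

section Measures

variable {X : Type*} [MeasurableSpace X]

theorem lintegral_lintegral_smul_measure (k : X → X → ℝ≥0∞) (ν : Measure X) {c : ℝ≥0∞}
    (hc : c ≠ ⊤) :
    ∫⁻ x, ∫⁻ y, k x y ∂(c • ν) ∂(c • ν) = c * (c * ∫⁻ x, ∫⁻ y, k x y ∂ν ∂ν) := by
  simp only [lintegral_smul_measure, smul_eq_mul]
  rw [lintegral_const_mul' _ _ hc]

theorem lintegral_lintegral_add_smul_dirac {k : X → X → ℝ≥0∞} (ν : Measure X) [SFinite ν]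
    (hk : Measurable (Function.uncurry k)) (hsymm : ∀ x y, k x y = k y x) {x₀ : X}
    (hdiag : k x₀ x₀ = 0) (c : ℝ≥0∞) :
    ∫⁻ x, ∫⁻ y, k x y ∂(ν + c • Measure.dirac x₀) ∂(ν + c • Measure.dirac x₀)
      = ∫⁻ x, ∫⁻ y, k x y ∂ν ∂ν + 2 * c * ∫⁻ x, k x x₀ ∂ν := by
  have hkx : ∀ x, Measurable (k x) := fun x => hk.comp measurable_prodMk_left
  have hkx₀ : Measurable fun x => k x x₀ := hk.comp measurable_prodMk_right
  have hinner : Measurable fun x => ∫⁻ y, k x y ∂ν := hk.lintegral_prod_right'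
  have hsplit : ∀ x, ∫⁻ y, k x y ∂(ν + c • Measure.dirac x₀)
      = ∫⁻ y, k x y ∂ν + c * k x x₀ := fun x => by
    rw [lintegral_add_measure, lintegral_smul_measure, lintegral_dirac' _ (hkx x), smul_eq_mul]
  have hcross : ∫⁻ y, k x₀ y ∂ν = ∫⁻ x, k x x₀ ∂ν := by simp only [hsymm x₀]
  have hsum : Measurable fun x => ∫⁻ y, k x y ∂ν + c * k x x₀ := hinner.add (hkx₀.const_mul c)
  simp only [hsplit]
  rw [lintegral_add_measure, lintegral_smul_measure, smul_eq_mul,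
    lintegral_dirac' _ hsum, lintegral_add_left hinner,
    lintegral_const_mul c hkx₀, hdiag, mul_zero, add_zero, hcross]
  ring

theorem lintegral_lintegral_le_of_ae_mem {k : X → X → ℝ≥0∞} {ν : Measure X} {Ω : Set X}
    {C : ℝ≥0∞} (hν : ∀ᵐ x ∂ν, x ∈ Ω) (hk : ∀ x ∈ Ω, ∀ y ∈ Ω, k x y ≤ C) :
    ∫⁻ x, ∫⁻ y, k x y ∂ν ∂ν ≤ C * ν Set.univ * ν Set.univ := by
  have hinner : ∀ᵐ x ∂ν, ∫⁻ y, k x y ∂ν ≤ C * ν Set.univ := by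
    filter_upwards [hν] with x hx
    calc ∫⁻ y, k x y ∂ν ≤ ∫⁻ _, C ∂ν := lintegral_mono_ae <| hν.mono fun y hy => hk x hx y hy
      _ = C * ν Set.univ := lintegral_const C
  calc ∫⁻ x, ∫⁻ y, k x y ∂ν ∂ν ≤ ∫⁻ _, C * ν Set.univ ∂ν := lintegral_mono_ae hinner
    _ = C * ν Set.univ * ν Set.univ := lintegral_const _

theorem withDensity_ofReal_const_mul (μ : Measure X) (φ : X → ℝ) {t : ℝ} (ht : 0 ≤ t) :
    μ.withDensity (fun x => ENNReal.ofReal (t * φ x))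
      = ENNReal.ofReal t • μ.withDensity (fun x => ENNReal.ofReal (φ x)) := by
  rw [← withDensity_smul' _ _ ENNReal.ofReal_ne_top]
  congr 1
  funext x
  exact ENNReal.ofReal_mul ht

theorem rnDeriv_withDensity_restrict_add_smul_dirac_ae_eq [MeasurableSingletonClass X]
    (μ : Measure X) [SigmaFinite μ] [NullSingletonClass μ] {Ω : Set X} (hΩ : MeasurableSet Ω)
    {f : X → ℝ} (hf : Measurable f) (x₀ : X) {c : ℝ≥0∞} (hc : c ≠ ⊤) :
    ((μ.restrict Ω).withDensity (fun x => ENNReal.ofReal (f x)) + c • Measure.dirac x₀).rnDeriv μ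
      =ᵐ[μ.restrict Ω] fun x => ENNReal.ofReal (f x) := by
  have := Measure.smul_finite (Measure.dirac x₀) hc
  have hsing : c • Measure.dirac x₀ ⟂ₘ μ := (mutuallySingular_dirac x₀ μ).smul c
  have hdensity : ((μ.restrict Ω).withDensity fun x => ENNReal.ofReal (f x)).rnDeriv μ
      =ᵐ[μ] Ω.indicator fun x => ENNReal.ofReal (f x) := by
    rw [← withDensity_indicator hΩ]
    exact Measure.rnDeriv_withDensity μ (hf.ennreal_ofReal.indicator hΩ)
  have hrn := (Measure.rnDeriv_add_of_mutuallySingular _ _ _ hsing).trans hdensity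
  filter_upwards [ae_restrict_of_ae hrn, ae_restrict_mem hΩ] with x hx hxΩ
  rw [hx, Set.indicator_of_mem hxΩ]

theorem ofReal_mul_ofReal_mul_rpow_neg {a t b : ℝ} (ha : 0 ≤ a) (ht : 0 < t) (hb : 0 < b)
    (s : ℝ) :
    ENNReal.ofReal a * ENNReal.ofReal (t * b) ^ (-s)
      = ENNReal.ofReal (t ^ (-s)) * ENNReal.ofReal (a * b ^ (-s)) := by
  rw [ENNReal.ofReal_rpow_of_pos (mul_pos ht hb), Real.mul_rpow ht.le hb.le,
    ENNReal.ofReal_mul (Real.rpow_nonneg ht.le _), ENNReal.ofReal_mul ha]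
  ring

theorem setLIntegral_rnDeriv_rpow_neg_withDensity_add_smul_dirac [MeasurableSingletonClass X]
    (μ : Measure X) [SigmaFinite μ] [NullSingletonClass μ] {Ω : Set X} (hΩ : MeasurableSet Ω)
    {ρ φ : X → ℝ} (hρ : ∀ x ∈ Ω, 0 ≤ ρ x) (hφ : Measurable φ) (hφpos : ∀ x ∈ Ω, 0 < φ x)
    {t : ℝ} (ht : 0 < t) (x₀ : X) {c : ℝ≥0∞} (hc : c ≠ ⊤) (s : ℝ) :
    ∫⁻ x in Ω, ENNReal.ofReal (ρ x) *
        (((μ.restrict Ω).withDensity (fun x => ENNReal.ofReal (t * φ x))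
          + c • Measure.dirac x₀).rnDeriv μ x) ^ (-s) ∂μ
      = ENNReal.ofReal (t ^ (-s)) * ∫⁻ x in Ω, ENNReal.ofReal (ρ x * φ x ^ (-s)) ∂μ := by
  rw [← lintegral_const_mul' _ _ ENNReal.ofReal_ne_top]
  refine lintegral_congr_ae ?_
  filter_upwards [rnDeriv_withDensity_restrict_add_smul_dirac_ae_eq μ hΩ
    (hφ.const_mul t) x₀ hc, ae_restrict_mem hΩ] with x hx hxΩ
  rw [hx, ofReal_mul_ofReal_mul_rpow_neg (hρ x hxΩ) ht (hφpos x hxΩ)]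

theorem ofReal_integral_add_two_mul {μ : Measure X} {f g : X → ℝ} (hf : Integrable f μ)
    (hg : Integrable g μ) (hf0 : 0 ≤ᵐ[μ] f) (hg0 : 0 ≤ᵐ[μ] g) :
    ENNReal.ofReal (∫ x, f x + 2 * g x ∂μ)
      = ∫⁻ x, ENNReal.ofReal (f x) ∂μ + 2 * ∫⁻ x, ENNReal.ofReal (g x) ∂μ := by
  rw [integral_add hf (hg.const_mul 2), integral_const_mul,
    ENNReal.ofReal_add (integral_nonneg_of_ae hf0)
      (mul_nonneg zero_le_two (integral_nonneg_of_ae hg0)),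
    ENNReal.ofReal_mul zero_le_two, ENNReal.ofReal_ofNat,
    ofReal_integral_eq_lintegral_ofReal hf hf0, ofReal_integral_eq_lintegral_ofReal hg hg0]

end Measures

theorem ENNReal.ofReal_rpow_mul_ofReal_rpow_of_add_eq_zero {ε a b : ℝ} (hε : 0 < ε)
    (hab : a + b = 0) : ENNReal.ofReal (ε ^ a) * ENNReal.ofReal (ε ^ b) = 1 := by
  rw [← ENNReal.ofReal_mul (Real.rpow_nonneg hε.le _), ← Real.rpow_add hε, hab,
    Real.rpow_zero, ENNReal.ofReal_one]

theorem tendsto_rpow_const_nhdsGT_zero {β : ℝ} (hβ : 0 < β) :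
    Tendsto (fun ε : ℝ => ε ^ β) (𝓝[>] 0) (𝓝 0) := by
  have h := (Real.continuousAt_rpow_const 0 β (Or.inr hβ.le)).tendsto
  rw [Real.zero_rpow hβ.ne'] at h
  exact h.mono_left nhdsWithin_le_nhds

theorem eventually_pos_and_rpow_mul_le_one {β : ℝ} (hβ : 0 < β) (F : ℝ) :
    ∀ᶠ ε in 𝓝[>] (0 : ℝ), 0 < ε ∧ ε ^ β * F ≤ 1 := by
  have hsmall : ∀ᶠ ε in 𝓝[>] (0 : ℝ), ε ^ β * F < 1 := by
    refine ((tendsto_rpow_const_nhdsGT_zero hβ).mul_const F).eventually_lt_const ?_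
    simp
  filter_upwards [self_mem_nhdsWithin, hsmall] with ε hε hεF
  exact ⟨hε, hεF.le⟩

theorem tendsto_recoveryEnergy {β : ℝ} (hβ : 0 < β) (F : ℝ) (A I M : ℝ≥0∞) (hI : I ≠ ⊤) :
    Tendsto (fun ε : ℝ => A + (ENNReal.ofReal (ε ^ β) * I
        + 2 * ENNReal.ofReal (1 - ε ^ β * F) * M)) (𝓝[>] 0) (𝓝 (A + 2 * M)) := by
  have hpow := tendsto_rpow_const_nhdsGT_zero hβ
  have hfirst : Tendsto (fun ε : ℝ => ENNReal.ofReal (ε ^ β) * I) (𝓝[>] 0) (𝓝 0) := by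
    simpa using ENNReal.Tendsto.mul_const (ENNReal.tendsto_ofReal hpow) (Or.inr hI)
  have hmass : Tendsto (fun ε : ℝ => 2 * ENNReal.ofReal (1 - ε ^ β * F)) (𝓝[>] 0) (𝓝 2) := by
    have h : Tendsto (fun ε : ℝ => 1 - ε ^ β * F) (𝓝[>] 0) (𝓝 1) := by
      simpa using tendsto_const_nhds.sub (hpow.mul_const F)
    simpa using ENNReal.Tendsto.const_mul (ENNReal.tendsto_ofReal h) (Or.inr ENNReal.ofNat_ne_top)
  simpa using tendsto_const_nhds.add
    (hfirst.add (ENNReal.Tendsto.mul_const hmass (Or.inl two_ne_zero)))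

section DistanceKernel

variable {X : Type*} [PseudoMetricSpace X] [MeasurableSpace X]

theorem lintegral_lintegral_dist_rpow_withDensity_add_smul_dirac [OpensMeasurableSpace X]
    [SecondCountableTopology X] (μ : Measure X) [SFinite μ]
    (Ω : Set X) {φ : X → ℝ} (hφ : Measurable φ) {q : ℝ} (hq : q ≠ 0) {t : ℝ} (ht : 0 ≤ t)
    (x₀ : X) (c : ℝ≥0∞) :
    ∫⁻ x, ∫⁻ y, ENNReal.ofReal (dist x y ^ q)
        ∂((μ.restrict Ω).withDensity (fun x => ENNReal.ofReal (t * φ x)) + c • Measure.dirac x₀)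
        ∂((μ.restrict Ω).withDensity (fun x => ENNReal.ofReal (t * φ x)) + c • Measure.dirac x₀)
      = ENNReal.ofReal t * (ENNReal.ofReal t * ∫⁻ x, ∫⁻ y, ENNReal.ofReal (dist x y ^ q)
            ∂(μ.restrict Ω).withDensity (fun x => ENNReal.ofReal (φ x))
            ∂(μ.restrict Ω).withDensity (fun x => ENNReal.ofReal (φ x))
          + 2 * c * ∫⁻ x in Ω, ENNReal.ofReal (dist x x₀ ^ q * φ x) ∂μ) := by
  have hk : Measurable (Function.uncurry fun x y : X => ENNReal.ofReal (dist x y ^ q)) :=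
    (measurable_dist.pow_const q).ennreal_ofReal
  have hcross : ∫⁻ x, ENNReal.ofReal (dist x x₀ ^ q)
        ∂(μ.restrict Ω).withDensity (fun x => ENNReal.ofReal (φ x))
      = ∫⁻ x in Ω, ENNReal.ofReal (dist x x₀ ^ q * φ x) ∂μ := by
    have hkx₀ : Measurable fun x => ENNReal.ofReal (dist x x₀ ^ q) :=
      hk.comp (measurable_id.prodMk measurable_const)
    rw [lintegral_withDensity_eq_lintegral_mul _ hφ.ennreal_ofReal hkx₀]
    refine lintegral_congr fun x => ?_
    rw [Pi.mul_apply, mul_comm, ENNReal.ofReal_mul (Real.rpow_nonneg dist_nonneg q)]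
  rw [withDensity_ofReal_const_mul _ _ ht,
    lintegral_lintegral_add_smul_dirac _ hk (fun x y => by rw [dist_comm]) (by simp [hq]),
    lintegral_lintegral_smul_measure _ _ ENNReal.ofReal_ne_top, lintegral_smul_measure,
    smul_eq_mul, hcross]
  ring

theorem lintegral_lintegral_dist_rpow_withDensity_ne_top (μ : Measure X) {Ω : Set X}
    (hΩ : Bornology.IsBounded Ω) (hΩm : MeasurableSet Ω) {φ : X → ℝ}
    (hφ : IntegrableOn φ Ω μ) {q : ℝ} (hq : 0 ≤ q) :
    ∫⁻ x, ∫⁻ y, ENNReal.ofReal (dist x y ^ q)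
        ∂(μ.restrict Ω).withDensity (fun x => ENNReal.ofReal (φ x))
        ∂(μ.restrict Ω).withDensity (fun x => ENNReal.ofReal (φ x)) ≠ ⊤ := by
  have hmem : ∀ᵐ x ∂(μ.restrict Ω).withDensity (fun x => ENNReal.ofReal (φ x)), x ∈ Ω :=
    (withDensity_absolutelyContinuous _ _).ae_le (ae_restrict_mem hΩm)
  have hk : ∀ x ∈ Ω, ∀ y ∈ Ω,
      ENNReal.ofReal (dist x y ^ q) ≤ ENNReal.ofReal (Metric.diam Ω ^ q) := fun x hx y hy =>
    ENNReal.ofReal_le_ofReal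
      (Real.rpow_le_rpow dist_nonneg (Metric.dist_le_diam_of_mem hΩ hx hy) hq)
  have hmass : (μ.restrict Ω).withDensity (fun x => ENNReal.ofReal (φ x)) Set.univ ≠ ⊤ := by
    rw [withDensity_apply _ MeasurableSet.univ, Measure.restrict_univ]
    exact hφ.lintegral_lt_top.ne
  refine ne_top_of_le_ne_top ?_ (lintegral_lintegral_le_of_ae_mem hmem hk)
  exact ENNReal.mul_ne_top (ENNReal.mul_ne_top ENNReal.ofReal_ne_top hmass) hmass

end DistanceKernel

theorem G_eps_limit_on_recovery_family_general
    (d : ℕ) (hd : 0 < d)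
    (Ω : Set (EuclideanSpace ℝ (Fin d))) (hΩ : IsCompact Ω)
    (x₀ : EuclideanSpace ℝ (Fin d))
    (p q s α β : ℝ) (hp : 0 < p) (hq : 0 < q)
    (hs : s = p / d) (hα : α = s / (1 + s)) (hβ : β = 1 / (1 + s))
    (ρ : EuclideanSpace ℝ (Fin d) → ℝ) (hρ0 : ∀ x ∈ Ω, 0 ≤ ρ x)
    (φ : EuclideanSpace ℝ (Fin d) → ℝ) (hφm : Measurable φ)
    (hφpos : ∀ x ∈ Ω, 0 < φ x)
    (hφint : IntegrableOn φ Ω)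
    (hloc : IntegrableOn (fun x => ρ x * φ x ^ (-s)) Ω)
    (hmom : IntegrableOn (fun x => dist x x₀ ^ q * φ x) Ω)
    (μ : ℝ → Measure (EuclideanSpace ℝ (Fin d)))
    (hμ : ∀ ε : ℝ, 0 < ε → ε ^ β * ∫ x in Ω, φ x ≤ 1 →
      μ ε = (volume.restrict Ω).withDensity (fun x => ENNReal.ofReal (ε ^ β * φ x))
        + (ENNReal.ofReal (1 - ε ^ β * ∫ x in Ω, φ x)) • Measure.dirac x₀)
    (G : ℝ → Measure (EuclideanSpace ℝ (Fin d)) → ℝ≥0∞)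
    (hG : ∀ ε ν, G ε ν =
      ENNReal.ofReal (ε ^ α) *
          (∫⁻ x in Ω, ENNReal.ofReal (ρ x) * (ν.rnDeriv volume x) ^ (-s))
        + ENNReal.ofReal (ε ^ (-β)) *
          ∫⁻ x, ∫⁻ y, ENNReal.ofReal (dist x y ^ q) ∂ν ∂ν) :
    Tendsto (fun ε => G ε (μ ε)) (𝓝[>] 0)
      (𝓝 (ENNReal.ofReal
        (∫ x in Ω, (ρ x * φ x ^ (-s) + 2 * dist x x₀ ^ q * φ x)))) := by
  -- Lebesgue measure is atomless only in positive dimension.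
  have : Nonempty (Fin d) := Fin.pos_iff_nonempty.mp hd
  have hs0 : 0 ≤ s := hs ▸ div_nonneg hp.le d.cast_nonneg
  have hβ0 : 0 < β := hβ ▸ by positivity
  have hαβ : α + β * -s = 0 := by rw [hα, hβ]; field_simp; ring
  have hΩm : MeasurableSet Ω := hΩ.isClosed.measurableSet
  set ν₁ := (volume.restrict Ω).withDensity fun x => ENNReal.ofReal (φ x)
  set A := ∫⁻ x in Ω, ENNReal.ofReal (ρ x * φ x ^ (-s))
  set M := ∫⁻ x in Ω, ENNReal.ofReal (dist x x₀ ^ q * φ x)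
  set I := ∫⁻ x, ∫⁻ y, ENNReal.ofReal (dist x y ^ q) ∂ν₁ ∂ν₁
  set F := ∫ x in Ω, φ x
  have hG_eq : ∀ᶠ ε in 𝓝[>] 0, G ε (μ ε)
      = A + (ENNReal.ofReal (ε ^ β) * I + 2 * ENNReal.ofReal (1 - ε ^ β * F) * M) := by
    filter_upwards [eventually_pos_and_rpow_mul_le_one hβ0 F] with ε ⟨hε, hεF⟩
    have hεβ : 0 < ε ^ β := Real.rpow_pos_of_pos hε β
    rw [hG, hμ ε hε hεF,
      setLIntegral_rnDeriv_rpow_neg_withDensity_add_smul_dirac _ hΩm hρ0 hφm hφpos hεβ _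
        ENNReal.ofReal_ne_top,
      lintegral_lintegral_dist_rpow_withDensity_add_smul_dirac _ _ hφm hq.ne' hεβ.le,
      ← mul_assoc, ← mul_assoc, ← Real.rpow_mul hε.le,
      ENNReal.ofReal_rpow_mul_ofReal_rpow_of_add_eq_zero hε hαβ,
      ENNReal.ofReal_rpow_mul_ofReal_rpow_of_add_eq_zero hε (neg_add_cancel β), one_mul, one_mul]
  have hlimit : ENNReal.ofReal (∫ x in Ω, (ρ x * φ x ^ (-s) + 2 * dist x x₀ ^ q * φ x))
      = A + 2 * M := by
    simp_rw [mul_assoc (2 : ℝ)]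
    refine ofReal_integral_add_two_mul hloc hmom ?_ ?_ <;>
      filter_upwards [ae_restrict_mem hΩm] with x hx
    · exact mul_nonneg (hρ0 x hx) (Real.rpow_nonneg (hφpos x hx).le _)
    · exact mul_nonneg (Real.rpow_nonneg dist_nonneg _) (hφpos x hx).le
  rw [hlimit]
  refine (tendsto_recoveryEnergy hβ0 F A I M ?_).congr' (hG_eq.mono fun _ h => h.symm)
  exact lintegral_lintegral_dist_rpow_withDensity_ne_top _ hΩ.isBounded hΩm hφint hq.le

/-- limit of the rescaled functional `G_ε` along the recovery family
`μ_ε = ε^β·φ·(Leb⌊Ω) + (1 − ε^β∫_Ω φ)·δ_{x₀}`: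
`G_ε(μ_ε) → ∫_Ω [ρ·φ^(−s) + 2·|x−x₀|^q·φ] dx` as `ε → 0⁺`, where
`G_ε(μ) = ε^α ∫_Ω ρ·u^(−s) dx + ε^(−β) ∫∫ |x−y|^q dμ dμ` and `u = dμ/dLeb`. -/
theorem G_eps_limit_on_recovery_family
    (d : ℕ) (hd : 0 < d)
    (Ω : Set (EuclideanSpace ℝ (Fin d))) (hΩ : IsCompact Ω)
    (x₀ : EuclideanSpace ℝ (Fin d)) (hx₀ : x₀ ∈ Ω)
    (p q s α β : ℝ) (hp : 0 < p) (hq : 0 < q)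
    (hs : s = p / d) (hα : α = s / (1 + s)) (hβ : β = 1 / (1 + s))
    (ρ : EuclideanSpace ℝ (Fin d) → ℝ) (hρ0 : ∀ x ∈ Ω, 0 ≤ ρ x)
    (hρint : IntegrableOn ρ Ω)
    (φ : EuclideanSpace ℝ (Fin d) → ℝ) (hφm : Measurable φ)
    (hφpos : ∀ x ∈ Ω, 0 < φ x)
    (hφint : IntegrableOn φ Ω)
    (hloc : IntegrableOn (fun x => ρ x * φ x ^ (-s)) Ω)
    (hmom : IntegrableOn (fun x => dist x x₀ ^ q * φ x) Ω)
    (μ : ℝ → Measure (EuclideanSpace ℝ (Fin d)))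
    (hμ : ∀ ε : ℝ, 0 < ε → ε ^ β * ∫ x in Ω, φ x ≤ 1 →
      μ ε = (volume.restrict Ω).withDensity (fun x => ENNReal.ofReal (ε ^ β * φ x))
        + (ENNReal.ofReal (1 - ε ^ β * ∫ x in Ω, φ x)) • Measure.dirac x₀)
    (G : ℝ → Measure (EuclideanSpace ℝ (Fin d)) → ℝ≥0∞)
    (hG : ∀ ε ν, G ε ν =
      ENNReal.ofReal (ε ^ α) *
          (∫⁻ x in Ω, ENNReal.ofReal (ρ x) * (ν.rnDeriv volume x) ^ (-s))
        + ENNReal.ofReal (ε ^ (-β)) *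
          ∫⁻ x, ∫⁻ y, ENNReal.ofReal (dist x y ^ q) ∂ν ∂ν) :
    Tendsto (fun ε => G ε (μ ε)) (𝓝[>] 0)
      (𝓝 (ENNReal.ofReal
        (∫ x in Ω, (ρ x * φ x ^ (-s) + 2 * dist x x₀ ^ q * φ x)))) :=
  G_eps_limit_on_recovery_family_general d hd Ω hΩ x₀ p q s α β hp hq hs hα hβ ρ hρ0 φ hφm hφpos
    hφint hloc hmom μ hμ G hG
end

section
/- Let Ω ⊂ ℝ^d be compact, x₀ ∈ Ω, p, q > 0; set s = p/d, α = s/(1+s), β = 1/(1+s), A = (1+s)·(2/s)^α. Let ρ : Ω → [0,∞) be integrable. Then for every sequence ε_n → 0⁺ and every sequence (μ_n) of Borel probability measures on Ω converging weakly to δ_{x₀}, one has liminf_{n→∞} G_{ε_n}(μ_n) ≥ A · ∫_Ω ρ(x)^β · |x−x₀|^{α·q} dx, where G_ε(μ) = ε^α ∫_Ω ρ(x)·u(x)^{−s} dx + ε^{−β} ∫_{Ω×Ω} |x−y|^q dμ(x) dμ(y) and u = dμ/dLeb is the density of the absolutely continuous part of μ. -/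
/-!
For every `ε > 0` the weighted AM-GM inequality gives, pointwise,
`(1 + s) (b / s)^α a^β ≤ ε^α a t^(-s) + ε^(-β) b t`, the powers of `ε` cancelling on the left.
Take `a = ρ x`, `t = u x` and `b = 2 μ(B_δ(x₀)) (|x - x₀| - δ)₊^q`. Since
`∫∫ |x - y|^q dμ dμ ≥ 2 μ(B_δ(x₀)) ∫ (|y - x₀| - δ)₊^q dμ ≥ 2 μ(B_δ(x₀)) ∫_Ω (|y - x₀| - δ)₊^q u`,
integrating over `Ω` gives `G_ε(μ) ≥ (1 + s) (2 μ(B_δ(x₀)) / s)^α ∫_Ω ρ^β (|x - x₀| - δ)₊^(αq)`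
for every `ε`. By the portmanteau theorem `μ_n(B_δ(x₀))` is eventually close to `1`; letting
`δ ↓ 0` (monotone convergence) gives the bound.
-/
open MeasureTheory Filter Topology
open scoped ENNReal

lemma one_add_mul_div_rpow_mul_rpow_le {s α β a b r : ℝ} (hs : 0 < s)
    (hα : α = s / (1 + s)) (hβ : β = 1 / (1 + s)) (ha : 0 ≤ a) (hb : 0 ≤ b) (hr : 0 < r) :
    (1 + s) * (b / s) ^ α * a ^ β ≤ a * r ^ (-s) + b * r := by
  have h1s : 0 < 1 + s := by linarith
  have hβα : β + α = 1 := by rw [hα, hβ]; field_simp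
  have hexp : -s * β + α = 0 := by rw [hα, hβ]; field_simp; ring
  have h1s_pow : (1 + s) ^ β * (1 + s) ^ α = 1 + s := by
    rw [← Real.rpow_add h1s, hβα, Real.rpow_one]
  have hr_pow : (r ^ (-s)) ^ β * r ^ α = 1 := by
    rw [← Real.rpow_mul hr.le, ← Real.rpow_add hr, hexp, Real.rpow_zero]
  calc (1 + s) * (b / s) ^ α * a ^ β
      = ((1 + s) * (a * r ^ (-s))) ^ β * ((1 + s) * (b / s * r)) ^ α := by
        rw [Real.mul_rpow h1s.le (by positivity), Real.mul_rpow ha (by positivity),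
          Real.mul_rpow h1s.le (by positivity), Real.mul_rpow (by positivity) hr.le]
        linear_combination -((b / s) ^ α * a ^ β) * h1s_pow -
          (b / s) ^ α * a ^ β * ((1 + s) ^ β * (1 + s) ^ α) * hr_pow
    _ ≤ β * ((1 + s) * (a * r ^ (-s))) + α * ((1 + s) * (b / s * r)) :=
        Real.geom_mean_le_arith_mean2_weighted (by rw [hβ]; positivity)
          (by rw [hα]; positivity) (by positivity) (by positivity) hβα
    _ = a * r ^ (-s) + b * r := by rw [hα, hβ]; field_simp

lemma ENNReal.ofReal_one_add_mul_div_rpow_mul_rpow_le {s α β a b ε : ℝ} (hs : 0 < s)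
    (hα : α = s / (1 + s)) (hβ : β = 1 / (1 + s)) (ha : 0 ≤ a) (hb : 0 ≤ b) (hε : 0 < ε)
    (t : ℝ≥0∞) :
    ENNReal.ofReal ((1 + s) * (b / s) ^ α * a ^ β) ≤
      ENNReal.ofReal (ε ^ α) * (ENNReal.ofReal a * t ^ (-s)) +
        ENNReal.ofReal (ε ^ (-β)) * (ENNReal.ofReal b * t) := by
  have hα0 : 0 < α := by rw [hα]; positivity
  have hβ0 : 0 < β := by rw [hβ]; positivity
  rcases ha.eq_or_lt with rfl | ha
  · simp [Real.zero_rpow hβ0.ne']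
  rcases hb.eq_or_lt with rfl | hb
  · simp [Real.zero_rpow hα0.ne']
  rcases eq_or_ne t 0 with rfl | ht0
  · simp [ENNReal.zero_rpow_of_neg (neg_neg_of_pos hs), ha, hε, Real.rpow_pos_of_pos]
  rcases eq_or_ne t ⊤ with rfl | htop
  · simp [hb, hε, Real.rpow_pos_of_pos]
  obtain ⟨r, hr, rfl⟩ : ∃ r : ℝ, 0 < r ∧ ENNReal.ofReal r = t :=
    ⟨t.toReal, ENNReal.toReal_pos ht0 htop, ENNReal.ofReal_toReal htop⟩
  have hεα : 0 < ε ^ α := Real.rpow_pos_of_pos hε _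
  have hεβ : 0 < ε ^ (-β) := Real.rpow_pos_of_pos hε _
  have hscale : (ε ^ (-β) * b / s) ^ α * (ε ^ α * a) ^ β = (b / s) ^ α * a ^ β := by
    rw [mul_div_assoc, Real.mul_rpow hεβ.le (by positivity), Real.mul_rpow hεα.le ha.le,
      ← Real.rpow_mul hε.le, ← Real.rpow_mul hε.le]
    have : ε ^ (-β * α) * ε ^ (α * β) = 1 := by
      rw [← Real.rpow_add hε, show -β * α + α * β = 0 by ring, Real.rpow_zero]
    linear_combination ((b / s) ^ α * a ^ β) * this
  rw [ENNReal.ofReal_rpow_of_pos hr, ← ENNReal.ofReal_mul ha.le, ← ENNReal.ofReal_mul hb.le,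
    ← ENNReal.ofReal_mul hεα.le, ← ENNReal.ofReal_mul hεβ.le,
    ← ENNReal.ofReal_add (by positivity) (by positivity)]
  refine ENNReal.ofReal_le_ofReal ?_
  calc (1 + s) * (b / s) ^ α * a ^ β = (1 + s) * (ε ^ (-β) * b / s) ^ α * (ε ^ α * a) ^ β := by
        linear_combination -(1 + s) * hscale
    _ ≤ ε ^ α * a * r ^ (-s) + ε ^ (-β) * b * r :=
        one_add_mul_div_rpow_mul_rpow_le hs hα hβ (by positivity) (by positivity) hr
    _ = ε ^ α * (a * r ^ (-s)) + ε ^ (-β) * (b * r) := by ring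

lemma setLIntegral_mul_rnDeriv_le {α : Type*} [MeasurableSpace α] (ν μ : Measure α)
    {f : α → ℝ≥0∞} (hf : Measurable f) (s : Set α) :
    ∫⁻ x in s, f x * ν.rnDeriv μ x ∂μ ≤ ∫⁻ x, f x ∂ν :=
  calc ∫⁻ x in s, f x * ν.rnDeriv μ x ∂μ ≤ ∫⁻ x, ν.rnDeriv μ x * f x ∂μ := by
        simp_rw [mul_comm (f _)]; exact setLIntegral_le_lintegral _ _
    _ = ∫⁻ x, f x ∂(μ.withDensity (ν.rnDeriv μ)) :=
        (lintegral_withDensity_eq_lintegral_mul μ (ν.measurable_rnDeriv μ) hf).symm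
    _ ≤ ∫⁻ x, f x ∂ν := lintegral_mono' (ν.withDensity_rnDeriv_le μ) le_rfl

section MetricMeasure

variable {X : Type*} [PseudoMetricSpace X]

lemma max_dist_sub_rpow_le_dist_rpow {x₀ x y : X} {δ q : ℝ} (hq : 0 ≤ q)
    (hy : y ∈ Metric.ball x₀ δ) :
    max (dist x x₀ - δ) 0 ^ q ≤ dist x y ^ q := by
  refine Real.rpow_le_rpow (le_max_right _ _) (max_le ?_ dist_nonneg) hq
  linarith [dist_triangle x y x₀, Metric.mem_ball.mp hy]

variable [MeasurableSpace X] [OpensMeasurableSpace X]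

lemma measurable_max_dist_sub_rpow (x₀ : X) (δ q : ℝ) :
    Measurable fun x => max (dist x x₀ - δ) 0 ^ q :=
  ((continuous_id.dist continuous_const).sub continuous_const).max continuous_const
    |>.measurable.pow_const q

-- A point `x` outside the ball is at distance `≥ (dist x x₀ - δ)₊` from all of the ball, and a
-- point inside it is at distance `≥ (dist y x₀ - δ)₊` from every `y`.
lemma two_mul_measure_ball_mul_lintegral_le (ν : Measure X) (x₀ : X) {δ q : ℝ} (hq : 0 < q) :
    2 * ν (Metric.ball x₀ δ) * ∫⁻ y, ENNReal.ofReal (max (dist y x₀ - δ) 0 ^ q) ∂ν ≤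
      ∫⁻ x, ∫⁻ y, ENNReal.ofReal (dist x y ^ q) ∂ν ∂ν := by
  set B := Metric.ball x₀ δ
  set c : X → ℝ≥0∞ := fun y => ENNReal.ofReal (max (dist y x₀ - δ) 0 ^ q)
  have hc : Measurable c := (measurable_max_dist_sub_rpow x₀ δ q).ennreal_ofReal
  have hpoint : ∀ x, B.indicator (fun _ => ∫⁻ y, c y ∂ν) x + c x * ν B ≤
      ∫⁻ y, ENNReal.ofReal (dist x y ^ q) ∂ν := by
    intro x
    by_cases hx : x ∈ B
    · have hcx : c x = 0 := by
        simp [c, max_eq_right (by linarith [Metric.mem_ball.mp hx] : dist x x₀ - δ ≤ 0),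
          Real.zero_rpow hq.ne']
      rw [Set.indicator_of_mem hx, hcx, zero_mul, add_zero]
      refine lintegral_mono fun y => ENNReal.ofReal_le_ofReal ?_
      rw [dist_comm x y]
      exact max_dist_sub_rpow_le_dist_rpow hq.le hx
    · rw [Set.indicator_of_notMem hx, zero_add, ← setLIntegral_const]
      refine (setLIntegral_mono' measurableSet_ball fun y hy => ?_).trans
        (setLIntegral_le_lintegral _ _)
      exact ENNReal.ofReal_le_ofReal (max_dist_sub_rpow_le_dist_rpow hq.le hy)
  calc 2 * ν B * ∫⁻ y, c y ∂ν
      = ∫⁻ x, B.indicator (fun _ => ∫⁻ y, c y ∂ν) x + c x * ν B ∂ν := by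
        rw [lintegral_add_left (measurable_const.indicator measurableSet_ball),
          lintegral_indicator_const measurableSet_ball, lintegral_mul_const _ hc]
        ring
    _ ≤ ∫⁻ x, ∫⁻ y, ENNReal.ofReal (dist x y ^ q) ∂ν ∂ν := lintegral_mono hpoint

lemma setLIntegral_le_energy_of_le_measure_ball {s α β q m ε δ : ℝ} (hs : 0 < s)
    (hα : α = s / (1 + s)) (hβ : β = 1 / (1 + s)) (hq : 0 < q) (μ ν : Measure X) (Ω : Set X)
    (x₀ : X) {ρ : X → ℝ} (hρ0 : ∀ᵐ x ∂μ.restrict Ω, 0 ≤ ρ x) (hm : 0 ≤ m)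
    (hmν : ENNReal.ofReal m ≤ ν (Metric.ball x₀ δ)) (hε : 0 < ε) :
    ENNReal.ofReal ((1 + s) * (2 * m / s) ^ α) *
        ∫⁻ x in Ω, ENNReal.ofReal (ρ x ^ β * max (dist x x₀ - δ) 0 ^ (α * q)) ∂μ ≤
      ENNReal.ofReal (ε ^ α) * (∫⁻ x in Ω, ENNReal.ofReal (ρ x) * ν.rnDeriv μ x ^ (-s) ∂μ) +
        ENNReal.ofReal (ε ^ (-β)) * ∫⁻ x, ∫⁻ y, ENNReal.ofReal (dist x y ^ q) ∂ν ∂ν := by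
  set u := ν.rnDeriv μ
  set c : X → ℝ := fun x => max (dist x x₀ - δ) 0 ^ q
  have hc : Measurable c := measurable_max_dist_sub_rpow x₀ δ q
  have hpoint : ∀ᵐ x ∂μ.restrict Ω,
      ENNReal.ofReal ((1 + s) * (2 * m / s) ^ α) *
          ENNReal.ofReal (ρ x ^ β * max (dist x x₀ - δ) 0 ^ (α * q)) ≤
        ENNReal.ofReal (ε ^ α) * (ENNReal.ofReal (ρ x) * u x ^ (-s)) +
          ENNReal.ofReal (ε ^ (-β)) * (ENNReal.ofReal (2 * m) * (ENNReal.ofReal (c x) * u x)) := by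
    filter_upwards [hρ0] with x hρx
    have hcx : 0 ≤ c x := by positivity
    have hconst : (1 + s) * (2 * m / s) ^ α * (ρ x ^ β * max (dist x x₀ - δ) 0 ^ (α * q)) =
        (1 + s) * (2 * m * c x / s) ^ α * ρ x ^ β := by
      rw [mul_div_right_comm (2 * m) (c x) s, Real.mul_rpow (by positivity) hcx,
        ← Real.rpow_mul (le_max_right _ _), mul_comm q α]
      ring
    rw [← ENNReal.ofReal_mul (by positivity), hconst, ← mul_assoc (ENNReal.ofReal (2 * m)),
      ← ENNReal.ofReal_mul (by positivity)]
    exact ENNReal.ofReal_one_add_mul_div_rpow_mul_rpow_le hs hα hβ hρx (by positivity) hε (u x)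
  have h2m : ENNReal.ofReal (2 * m) ≤ 2 * ν (Metric.ball x₀ δ) := by
    rw [ENNReal.ofReal_mul zero_le_two, ENNReal.ofReal_ofNat]
    gcongr
  calc _ = ∫⁻ x in Ω, ENNReal.ofReal ((1 + s) * (2 * m / s) ^ α) *
          ENNReal.ofReal (ρ x ^ β * max (dist x x₀ - δ) 0 ^ (α * q)) ∂μ :=
        (lintegral_const_mul' _ _ ENNReal.ofReal_ne_top).symm
    _ ≤ _ := lintegral_mono_ae hpoint
    _ = ENNReal.ofReal (ε ^ α) * (∫⁻ x in Ω, ENNReal.ofReal (ρ x) * u x ^ (-s) ∂μ) +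
          ENNReal.ofReal (ε ^ (-β)) *
            (ENNReal.ofReal (2 * m) * ∫⁻ x in Ω, ENNReal.ofReal (c x) * u x ∂μ) := by
        rw [lintegral_add_right' _ (by fun_prop), lintegral_const_mul' _ _ ENNReal.ofReal_ne_top,
          lintegral_const_mul' _ _ ENNReal.ofReal_ne_top,
          lintegral_const_mul' _ _ ENNReal.ofReal_ne_top]
    _ ≤ ENNReal.ofReal (ε ^ α) * (∫⁻ x in Ω, ENNReal.ofReal (ρ x) * u x ^ (-s) ∂μ) +
          ENNReal.ofReal (ε ^ (-β)) *
            (2 * ν (Metric.ball x₀ δ) * ∫⁻ y, ENNReal.ofReal (c y) ∂ν) := by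
        gcongr _ + _ * (?_ * ?_)
        exact setLIntegral_mul_rnDeriv_le ν μ hc.ennreal_ofReal Ω
    _ ≤ _ := by
        gcongr
        exact two_mul_measure_ball_mul_lintegral_le ν x₀ hq

lemma tendsto_lintegral_mul_max_dist_sub_rpow {μ : Measure X} {w : X → ℝ}
    (hw0 : ∀ᵐ x ∂μ, 0 ≤ w x) (hw : AEMeasurable w μ) (x₀ : X) {γ : ℝ} (hγ : 0 ≤ γ)
    {δ : ℕ → ℝ} (hδ : Antitone δ) (hδ0 : Tendsto δ atTop (𝓝 0)) :
    Tendsto (fun k => ∫⁻ x, ENNReal.ofReal (w x * max (dist x x₀ - δ k) 0 ^ γ) ∂μ) atTop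
      (𝓝 (∫⁻ x, ENNReal.ofReal (w x * dist x x₀ ^ γ) ∂μ)) := by
  refine lintegral_tendsto_of_tendsto_of_monotone
    (fun k => (hw.mul (measurable_max_dist_sub_rpow x₀ (δ k) γ).aemeasurable).ennreal_ofReal)
    ?_ ?_
  · filter_upwards [hw0] with x hwx k l hkl
    dsimp only
    gcongr
    exact hδ hkl
  · filter_upwards with x
    refine ENNReal.tendsto_ofReal (Tendsto.const_mul _ (Tendsto.rpow_const ?_ (Or.inr hγ)))
    simpa using ((tendsto_const_nhds (x := dist x x₀)).sub hδ0).max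
      (tendsto_const_nhds (x := (0 : ℝ)))

end MetricMeasure

lemma one_le_liminf_measure_open_of_tendsto_integral_dirac {X : Type*} [PseudoMetricSpace X]
    [MeasurableSpace X] [OpensMeasurableSpace X] {x₀ : X} {μ : ℕ → Measure X}
    [∀ n, IsProbabilityMeasure (μ n)]
    (hweak : ∀ f : BoundedContinuousFunction X ℝ,
      Tendsto (fun n => ∫ x, f x ∂(μ n)) atTop (𝓝 (f x₀)))
    {G : Set X} (hG : IsOpen G) (hx₀ : x₀ ∈ G) :
    1 ≤ liminf (fun n => μ n G) atTop := by
  let μs : ℕ → ProbabilityMeasure X := fun n => ⟨μ n, inferInstance⟩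
  let dirac : ProbabilityMeasure X := ⟨Measure.dirac x₀, inferInstance⟩
  have hlim : Tendsto μs atTop (𝓝 dirac) := by
    refine ProbabilityMeasure.tendsto_iff_forall_integral_tendsto.2 fun f => ?_
    rw [ProbabilityMeasure.coe_mk, integral_dirac' _ _ f.continuous.stronglyMeasurable]
    exact hweak f
  calc 1 = (dirac : Measure X) G := (Measure.dirac_apply_of_mem hx₀).symm
    _ ≤ liminf (fun n => (μs n : Measure X) G) atTop :=
      ProbabilityMeasure.le_liminf_measure_open_of_tendsto hlim hG

theorem gamma_liminf_inequality_general
    (d : ℕ) (hd : 0 < d)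
    (Ω : Set (EuclideanSpace ℝ (Fin d))) (hΩ : IsCompact Ω)
    (x₀ : EuclideanSpace ℝ (Fin d))
    (p q s α β A : ℝ) (hp : 0 < p) (hq : 0 < q)
    (hs : s = p / d) (hα : α = s / (1 + s)) (hβ : β = 1 / (1 + s))
    (hA : A = (1 + s) * (2 / s) ^ α)
    (ρ : EuclideanSpace ℝ (Fin d) → ℝ) (hρ0 : ∀ x ∈ Ω, 0 ≤ ρ x)
    (hρint : IntegrableOn ρ Ω)
    (G : ℝ → Measure (EuclideanSpace ℝ (Fin d)) → ℝ≥0∞)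
    (hG : ∀ ε ν, G ε ν =
      ENNReal.ofReal (ε ^ α) *
          (∫⁻ x in Ω, ENNReal.ofReal (ρ x) * (ν.rnDeriv volume x) ^ (-s))
        + ENNReal.ofReal (ε ^ (-β)) *
          ∫⁻ x, ∫⁻ y, ENNReal.ofReal (dist x y ^ q) ∂ν ∂ν)
    (ε : ℕ → ℝ) (hεpos : ∀ n, 0 < ε n)
    (μ : ℕ → Measure (EuclideanSpace ℝ (Fin d)))
    (hμprob : ∀ n, IsProbabilityMeasure (μ n))
    (hweak : ∀ f : BoundedContinuousFunction (EuclideanSpace ℝ (Fin d)) ℝ,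
      Tendsto (fun n => ∫ x, f x ∂(μ n)) atTop (𝓝 (f x₀))) :
    ENNReal.ofReal A * (∫⁻ x in Ω, ENNReal.ofReal (ρ x ^ β * dist x x₀ ^ (α * q)))
      ≤ liminf (fun n => G (ε n) (μ n)) atTop := by
  have hs0 : 0 < s := hs ▸ div_pos hp (Nat.cast_pos.2 hd)
  have hα0 : 0 < α := by rw [hα]; positivity
  have hρ0_ae : ∀ᵐ x ∂volume.restrict Ω, 0 ≤ ρ x :=
    ae_restrict_of_forall_mem hΩ.isClosed.measurableSet hρ0
  set δ : ℕ → ℝ := fun k => 1 / ((k : ℝ) + 1)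
  have hδ_pos (k : ℕ) : 0 < δ k := by positivity
  have hδ_le_one (k : ℕ) : δ k ≤ 1 := div_le_one_of_le₀ (by simp) (by positivity)
  have hδ_lim : Tendsto δ atTop (𝓝 0) := tendsto_one_div_add_atTop_nhds_zero_nat
  have hbound (k : ℕ) : ENNReal.ofReal ((1 + s) * (2 * (1 - δ k) / s) ^ α) *
      ∫⁻ x in Ω, ENNReal.ofReal (ρ x ^ β * max (dist x x₀ - δ k) 0 ^ (α * q)) ≤
        liminf (fun n => G (ε n) (μ n)) atTop := by
    have hball : ∀ᶠ n in atTop, ENNReal.ofReal (1 - δ k) < μ n (Metric.ball x₀ (δ k)) :=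
      eventually_lt_of_lt_liminf <| (ENNReal.ofReal_lt_one.2 (by linarith [hδ_pos k])).trans_le <|
        one_le_liminf_measure_open_of_tendsto_integral_dirac hweak Metric.isOpen_ball
          (Metric.mem_ball_self (hδ_pos k))
    refine le_liminf_of_le (by isBoundedDefault) (hball.mono fun n hn => ?_)
    rw [hG]
    exact setLIntegral_le_energy_of_le_measure_ball hs0 hα hβ hq volume (μ n) Ω x₀ hρ0_ae
      (sub_nonneg.2 (hδ_le_one k)) hn.le (hεpos n)
  have hlim : Tendsto (fun k => ENNReal.ofReal ((1 + s) * (2 * (1 - δ k) / s) ^ α) *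
      ∫⁻ x in Ω, ENNReal.ofReal (ρ x ^ β * max (dist x x₀ - δ k) 0 ^ (α * q))) atTop
      (𝓝 (ENNReal.ofReal A * ∫⁻ x in Ω, ENNReal.ofReal (ρ x ^ β * dist x x₀ ^ (α * q)))) := by
    refine ENNReal.Tendsto.mul ?_ (Or.inl (by rw [hA]; positivity))
      (tendsto_lintegral_mul_max_dist_sub_rpow (hρ0_ae.mono fun x hx => by positivity)
        (hρint.aemeasurable.pow_const β) x₀ (by positivity)
        (fun k l hkl => by dsimp only [δ]; gcongr) hδ_lim)
      (Or.inr ENNReal.ofReal_ne_top)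
    rw [hA]
    refine ENNReal.tendsto_ofReal (Tendsto.const_mul _ (Tendsto.rpow_const ?_ (Or.inr hα0.le)))
    simpa using (((tendsto_const_nhds (x := (1 : ℝ))).sub hδ_lim).const_mul 2).div_const s
  exact le_of_tendsto' hlim hbound

/-- Γ-liminf: for compact `Ω ⊆ ℝ^d`, `x₀ ∈ Ω`, `p, q > 0`, `s = p/d`,
`α = s/(1+s)`, `β = 1/(1+s)`, `A = (1+s)(2/s)^α` and integrable `ρ : Ω → [0,∞)`:
for every sequence `ε_n → 0⁺` and every sequence of probability measures `μ_n` on `Ω`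
converging weakly to `δ_{x₀}`, `liminf_n G_{ε_n}(μ_n) ≥ A ∫_Ω ρ^β |x−x₀|^{αq} dx`. -/
theorem gamma_liminf_inequality
    (d : ℕ) (hd : 0 < d)
    (Ω : Set (EuclideanSpace ℝ (Fin d))) (hΩ : IsCompact Ω)
    (x₀ : EuclideanSpace ℝ (Fin d)) (hx₀ : x₀ ∈ Ω)
    (p q s α β A : ℝ) (hp : 0 < p) (hq : 0 < q)
    (hs : s = p / d) (hα : α = s / (1 + s)) (hβ : β = 1 / (1 + s))
    (hA : A = (1 + s) * (2 / s) ^ α)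
    (ρ : EuclideanSpace ℝ (Fin d) → ℝ) (hρ0 : ∀ x ∈ Ω, 0 ≤ ρ x)
    (hρint : IntegrableOn ρ Ω)
    (G : ℝ → Measure (EuclideanSpace ℝ (Fin d)) → ℝ≥0∞)
    (hG : ∀ ε ν, G ε ν =
      ENNReal.ofReal (ε ^ α) *
          (∫⁻ x in Ω, ENNReal.ofReal (ρ x) * (ν.rnDeriv volume x) ^ (-s))
        + ENNReal.ofReal (ε ^ (-β)) *
          ∫⁻ x, ∫⁻ y, ENNReal.ofReal (dist x y ^ q) ∂ν ∂ν)
    (ε : ℕ → ℝ) (hεpos : ∀ n, 0 < ε n) (hεlim : Tendsto ε atTop (𝓝 0))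
    (μ : ℕ → Measure (EuclideanSpace ℝ (Fin d)))
    (hμprob : ∀ n, IsProbabilityMeasure (μ n)) (hμΩ : ∀ n, μ n Ωᶜ = 0)
    (hweak : ∀ f : BoundedContinuousFunction (EuclideanSpace ℝ (Fin d)) ℝ,
      Tendsto (fun n => ∫ x, f x ∂(μ n)) atTop (𝓝 (f x₀))) :
    ENNReal.ofReal A * (∫⁻ x in Ω, ENNReal.ofReal (ρ x ^ β * dist x x₀ ^ (α * q)))
      ≤ liminf (fun n => G (ε n) (μ n)) atTop :=
  gamma_liminf_inequality_general d hd Ω hΩ x₀ p q s α β A hp hq hs hα hβ hA ρ hρ0 hρint G hG ε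
    hεpos μ hμprob hweak
end

section
/- Let A > 0, B > 0, let ρ : ℝ → [0,∞) be integrable with total mass m = ∫ ρ dx > 0, barycenter zero (∫ x ρ(x) dx = 0) and finite second moment. Set λ = 1 + 4B/A, T(x) = λ·x, and v(y) = ρ(y/λ)/λ, and let ν be the measure with density v. Then: (i) ν is the image (pushforward) of the measure ρ·dx under T, it has total mass m and barycenter zero; (ii) the pair (T, ν) solves the optimality system: A·(x − T(x)) + (2B/m)·(V′*ν)(x) = 0 for all x ∈ ℝ, where V(s) = s² so (V′*ν)(x) = ∫ 2(x−y) dν(y); and (iii) the one-dimensional Monge–Ampère equation ρ(x) = v(T(x))·T′(x) holds for almost every x. -/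
open MeasureTheory

/-!
`T` is the dilation by `λ`, so the one-dimensional change of variables gives `ν = T_#(ρ dx)`;
hence `ν` has mass `m` and barycenter `λ · 0 = 0`. For `V(s) = s²` this makes
`(V′*ν)(x) = 2(m x − ∫ y dν) = 2 m x`, and the optimality equation collapses to
`A(1 − λ) + 4B = 0`, which is how `λ` was chosen. The Monge–Ampère equation holds pointwise,
since `v(λx) λ = ρ(x)`.
-/

theorem MeasurableEquiv.map_withDensity {α β : Type*} [MeasurableSpace α] [MeasurableSpace β]
    (e : α ≃ᵐ β) (μ : Measure α) [SFinite μ] (f : α → ENNReal) :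
    (μ.withDensity f).map e = (μ.map e).withDensity (f ∘ e.symm) := by
  ext s hs
  rw [e.map_apply, withDensity_apply' _ s, withDensity_apply' _ (e ⁻¹' s), e.restrict_map,
    lintegral_map_equiv]
  simp

theorem Real.map_const_mul_withDensity {c : ℝ} (hc : c ≠ 0) (f : ℝ → ENNReal) :
    (volume.withDensity f).map (fun x => c * x) =
      volume.withDensity fun y => ENNReal.ofReal |c|⁻¹ * f (y / c) := by
  have hmap := (Homeomorph.mulLeft₀ c hc).toMeasurableEquiv.map_withDensity volume f
  simp only [Homeomorph.toMeasurableEquiv_coe, Homeomorph.coe_mulLeft₀,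
    Homeomorph.toMeasurableEquiv_symm_coe, Homeomorph.mulLeft₀_symm_apply] at hmap
  rw [hmap, Real.map_volume_mul_left hc, abs_inv, withDensity_smul_measure,
    ← withDensity_smul' _ _ ENNReal.ofReal_ne_top]
  congr 1
  ext y
  simp [div_eq_inv_mul]

theorem MeasureTheory.integral_withDensity_ofReal {α : Type*} [MeasurableSpace α]
    {μ : Measure α} {f : α → ℝ} (hf : AEMeasurable f μ) (hf0 : 0 ≤ᵐ[μ] f) (g : α → ℝ) :
    ∫ x, g x ∂μ.withDensity (fun x => ENNReal.ofReal (f x)) = ∫ x, f x * g x ∂μ := by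
  rw [integral_withDensity_eq_integral_toReal_smul₀ hf.ennreal_ofReal
    (ae_of_all _ fun _ => ENNReal.ofReal_lt_top)]
  refine integral_congr_ae ?_
  filter_upwards [hf0] with x hx
  rw [ENNReal.toReal_ofReal hx, smul_eq_mul]

theorem MeasureTheory.Integrable.id_mul_of_sq_mul {μ : Measure ℝ} {f : ℝ → ℝ}
    (hf : Integrable f μ) (hf2 : Integrable (fun x => x ^ 2 * f x) μ) :
    Integrable (fun x => x * f x) μ := by
  refine (hf.norm.add hf2.norm).mono' (aestronglyMeasurable_id.mul hf.1)
    (ae_of_all _ fun x => ?_)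
  have hx : |x| ≤ 1 + x ^ 2 := by nlinarith [sq_nonneg (|x| - 1), sq_abs x]
  simp only [Pi.add_apply, norm_mul, Real.norm_eq_abs, abs_pow, sq_abs]
  nlinarith [abs_nonneg (f x)]

/-- the explicit one-dimensional solution of the optimality system for the
mass-dependent routing model with `p = 2` and `V(s) = s²`.  With `λ = 1 + 4B/A`,
`T(x) = λx` and `v(y) = ρ(y/λ)/λ`, the measure `ν = v·dx` is the pushforward of `ρ·dx`
under `T`, has total mass `m` and barycenter zero; the pair `(T, ν)` solves
`A(x − T(x)) + (2B/m)(V′*ν)(x) = 0` with `(V′*ν)(x) = ∫ 2(x−y) dν(y)`; and the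
one-dimensional Monge–Ampère equation `ρ(x) = v(T(x))·T′(x)` holds a.e. (`T′ = λ`). -/
theorem one_dim_mass_routing_explicit_solution
    (A B : ℝ) (hA : 0 < A) (hB : 0 < B)
    (ρ : ℝ → ℝ) (hρ0 : ∀ x, 0 ≤ ρ x) (hρint : Integrable ρ)
    (m : ℝ) (hm : m = ∫ x, ρ x) (hmpos : 0 < m)
    (hbar : ∫ x, x * ρ x = 0)
    (h2 : Integrable (fun x => x ^ 2 * ρ x))
    (lam : ℝ) (hlam : lam = 1 + 4 * B / A)
    (T : ℝ → ℝ) (hT : T = fun x => lam * x)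
    (v : ℝ → ℝ) (hv : v = fun y => ρ (y / lam) / lam)
    (ν : Measure ℝ) (hν : ν = volume.withDensity (fun y => ENNReal.ofReal (v y))) :
    (ν = Measure.map T (volume.withDensity (fun x => ENNReal.ofReal (ρ x))) ∧
      ν Set.univ = ENNReal.ofReal m ∧ ∫ y, y ∂ν = 0) ∧
    (∀ x : ℝ, A * (x - T x) + (2 * B / m) * ∫ y, 2 * (x - y) ∂ν = 0) ∧
    (∀ᵐ x ∂volume, ρ x = v (T x) * lam) := by
  have hlam_pos : 0 < lam := by rw [hlam]; positivity
  have hpush : ν = Measure.map T (volume.withDensity (fun x => ENNReal.ofReal (ρ x))) := by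
    rw [hν, hT, Real.map_const_mul_withDensity hlam_pos.ne', abs_of_pos hlam_pos, hv]
    simp_rw [← ENNReal.ofReal_mul (inv_nonneg.2 hlam_pos.le), inv_mul_eq_div]
  have hT_emb : MeasurableEmbedding T :=
    hT ▸ (Homeomorph.mulLeft₀ lam hlam_pos.ne').measurableEmbedding
  have hintegral (g : ℝ → ℝ) : ∫ y, g y ∂ν = ∫ x, ρ x * g (lam * x) := by
    rw [hpush, hT_emb.integral_map,
      integral_withDensity_ofReal hρint.aemeasurable (ae_of_all _ hρ0), hT]
  have hV (x : ℝ) : ∫ y, 2 * (x - y) ∂ν = 2 * m * x := by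
    calc ∫ y, 2 * (x - y) ∂ν = ∫ t, 2 * x * ρ t - 2 * lam * (t * ρ t) := by
          rw [hintegral]; congr 1; ext t; ring
      _ = 2 * m * x := by
          rw [integral_sub (hρint.const_mul _) ((hρint.id_mul_of_sq_mul h2).const_mul _),
            integral_const_mul, integral_const_mul, hbar, ← hm]
          ring
  refine ⟨⟨hpush, ?_, ?_⟩, fun x => ?_, ae_of_all _ fun x => ?_⟩
  · rw [hpush, hT_emb.map_apply, Set.preimage_univ, withDensity_apply _ MeasurableSet.univ,
      Measure.restrict_univ, ← ofReal_integral_eq_lintegral_ofReal hρint (ae_of_all _ hρ0), hm]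
  · rw [hintegral]
    simp_rw [mul_left_comm (ρ _), integral_const_mul, mul_comm (ρ _), hbar, mul_zero]
  · rw [hV, hT, hlam]
    field_simp
    ring
  · rw [hv, hT]
    field_simp
end

section
/- Define ρ : [−1,1] → ℝ by ρ(x) = 2 for x ∈ [−1,0] and ρ(x) = 1 for x ∈ (0,1], and for x₀ ∈ [−1,1] define H(x₀) = ∫_{−1}^{1} √(ρ(x)) · |x − x₀| dx. Then for every x₀ ∈ [−1,0], H(x₀) = √2·x₀² + (√2 − 1)·x₀ + (√2 + 1)/2, and H attains its minimum over [−1,1] at the unique point x₀* = (√2 − 2)/4. -/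
open Real

open intervalIntegral in
lemma int_id_sub' (a b c : ℝ) : ∫ x in a..b, (x - c) = (b^2 - a^2)/2 - c*(b-a) := by
  have hid : Continuous (fun x : ℝ => x) := continuous_id
  rw [integral_sub (hid.intervalIntegrable a b) (intervalIntegrable_const)]
  simp [integral_id]
  ring

lemma intAbsR' (a b c : ℝ) (hca : c ≤ a) (hab : a ≤ b) :
    ∫ x in a..b, |x - c| = (b^2 - a^2)/2 - c*(b-a) := by
  rw [← int_id_sub']
  apply intervalIntegral.integral_congr
  intro x hx
  rw [Set.uIcc_of_le hab] at hx
  show |x - c| = x - c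
  rw [abs_of_nonneg (by linarith [hx.1])]

lemma intAbsL' (a b c : ℝ) (hab : a ≤ b) (hbc : b ≤ c) :
    ∫ x in a..b, |x - c| = c*(b-a) - (b^2 - a^2)/2 := by
  have h : ∫ x in a..b, |x - c| = ∫ x in a..b, -(x - c) := by
    apply intervalIntegral.integral_congr
    intro x hx
    rw [Set.uIcc_of_le hab] at hx
    show |x - c| = -(x - c)
    rw [abs_of_nonpos (by linarith [hx.2])]
  rw [h, intervalIntegral.integral_neg, int_id_sub']; ring

lemma intAbsCont' (a b c : ℝ) :
    IntervalIntegrable (fun x => |x - c|) MeasureTheory.volume a b :=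
  ((continuous_id.sub continuous_const).abs).intervalIntegrable a b

lemma intAbsM' (a b c : ℝ) (hac : a ≤ c) (hcb : c ≤ b) :
    ∫ x in a..b, |x - c| = ((c-a)^2 + (b-c)^2)/2 := by
  rw [← intervalIntegral.integral_add_adjacent_intervals (intAbsCont' a c c) (intAbsCont' c b c),
    intAbsL' a c c hac le_rfl, intAbsR' c b c le_rfl hcb]
  ring

/-- for the two-valued density `ρ = 2` on `[−1,0]`, `ρ = 1` on `(0,1]`,
the Torricelli-type functional `H(x₀) = ∫_{−1}^{1} √(ρ(x))·|x−x₀| dx` satisfies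
`H(x₀) = √2·x₀² + (√2−1)·x₀ + (√2+1)/2` for `x₀ ∈ [−1,0]`, and attains its minimum
over `[−1,1]` at the unique point `x₀* = (√2−2)/4`. -/
theorem torricelli_two_valued_density
    (ρ : ℝ → ℝ)
    (hρleft : ∀ x ∈ Set.Icc (-1 : ℝ) 0, ρ x = 2)
    (hρright : ∀ x ∈ Set.Ioc (0 : ℝ) 1, ρ x = 1)
    (H : ℝ → ℝ)
    (hH : H = fun x₀ => ∫ x in (-1 : ℝ)..1, Real.sqrt (ρ x) * |x - x₀|) :
    (∀ x₀ ∈ Set.Icc (-1 : ℝ) 0,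
      H x₀ = Real.sqrt 2 * x₀ ^ 2 + (Real.sqrt 2 - 1) * x₀ + (Real.sqrt 2 + 1) / 2) ∧
    (∀ x₀ ∈ Set.Icc (-1 : ℝ) 1, H ((Real.sqrt 2 - 2) / 4) ≤ H x₀) ∧
    (∀ x₀ ∈ Set.Icc (-1 : ℝ) 1,
      H x₀ = H ((Real.sqrt 2 - 2) / 4) → x₀ = (Real.sqrt 2 - 2) / 4) := by
  set s := Real.sqrt 2 with hs
  have hs2 : s^2 = 2 := Real.sq_sqrt (by norm_num)
  have hs1 : 1 < s := by nlinarith [Real.sqrt_nonneg 2]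
  have hslt2 : s < 2 := by nlinarith [Real.sqrt_nonneg 2]
  -- step 1: replace the integrand by a piecewise explicit function
  have hsplit : ∀ x₀ : ℝ, H x₀ =
      (∫ x in (-1 : ℝ)..0, s * |x - x₀|) + ∫ x in (0 : ℝ)..1, |x - x₀| := by
    intro x₀
    have hc1 : IntervalIntegrable (fun x => Real.sqrt (ρ x) * |x - x₀|)
        MeasureTheory.volume (-1) 0 := by
      rw [intervalIntegrable_iff]
      apply MeasureTheory.IntegrableOn.congr_fun
        (f := fun x => s * |x - x₀|)
      · rw [← intervalIntegrable_iff]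
        exact (continuous_const.mul (continuous_id.sub continuous_const).abs).intervalIntegrable
          (-1) 0
      · intro x hx
        rw [Set.uIoc_of_le (by norm_num : (-1:ℝ) ≤ 0)] at hx
        have : ρ x = 2 := hρleft x ⟨le_of_lt hx.1, hx.2⟩
        simp [this, hs]
      · exact measurableSet_uIoc
    have hc2 : IntervalIntegrable (fun x => Real.sqrt (ρ x) * |x - x₀|)
        MeasureTheory.volume 0 1 := by
      rw [intervalIntegrable_iff]
      apply MeasureTheory.IntegrableOn.congr_fun (f := fun x => |x - x₀|)
      · rw [← intervalIntegrable_iff]; exact intAbsCont' 0 1 x₀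
      · intro x hx
        rw [Set.uIoc_of_le (by norm_num : (0:ℝ) ≤ 1)] at hx
        have : ρ x = 1 := hρright x hx
        simp [this]
      · exact measurableSet_uIoc
    rw [hH]
    show (∫ x in (-1 : ℝ)..1, Real.sqrt (ρ x) * |x - x₀|) = _
    rw [← intervalIntegral.integral_add_adjacent_intervals hc1 hc2]
    congr 1
    · apply intervalIntegral.integral_congr
      intro x hx
      rw [Set.uIcc_of_le (by norm_num : (-1:ℝ) ≤ 0)] at hx
      have : ρ x = 2 := hρleft x hx
      simp [this, hs]
    · apply intervalIntegral.integral_congr_ae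
      filter_upwards with x hx
      rw [Set.uIoc_of_le (by norm_num : (0:ℝ) ≤ 1)] at hx
      have : ρ x = 1 := hρright x hx
      simp [this]
  -- explicit formula on [-1,0]
  have hleft : ∀ x₀ ∈ Set.Icc (-1 : ℝ) 0,
      H x₀ = s * x₀ ^ 2 + (s - 1) * x₀ + (s + 1) / 2 := by
    intro x₀ hx₀
    rw [hsplit x₀, intervalIntegral.integral_const_mul,
      intAbsM' (-1) 0 x₀ hx₀.1 hx₀.2, intAbsR' 0 1 x₀ hx₀.2 (by norm_num)]
    ring
  -- explicit formula on [0,1]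
  have hright : ∀ x₀ ∈ Set.Icc (0 : ℝ) 1,
      H x₀ = x₀ ^ 2 + (s - 1) * x₀ + (s + 1) / 2 := by
    intro x₀ hx₀
    rw [hsplit x₀, intervalIntegral.integral_const_mul,
      intAbsL' (-1) 0 x₀ (by norm_num) hx₀.1, intAbsM' 0 1 x₀ hx₀.1 hx₀.2]
    ring
  set xm : ℝ := (s - 2) / 4 with hxm
  have hxmem : xm ∈ Set.Icc (-1 : ℝ) 0 := by
    constructor <;> [nlinarith; nlinarith]
  have hHm : H xm = s * xm ^ 2 + (s - 1) * xm + (s + 1) / 2 := hleft xm hxmem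
  have key : ∀ x₀ ∈ Set.Icc (-1 : ℝ) 1, H x₀ - H xm =
      (if x₀ ≤ 0 then s * (x₀ - xm)^2 else x₀ ^ 2 + (s - 1) * x₀ + s * xm ^ 2) := by
    intro x₀ hx₀
    by_cases h : x₀ ≤ 0
    · rw [if_pos h, hleft x₀ ⟨hx₀.1, h⟩, hHm, hxm]
      ring_nf
      nlinarith [hs2]
    · rw [if_neg h, hright x₀ ⟨le_of_not_ge h, hx₀.2⟩, hHm, hxm]
      ring_nf
      nlinarith [hs2]
  refine ⟨hleft, ?_, ?_⟩
  · intro x₀ hx₀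
    have := key x₀ hx₀
    by_cases h : x₀ ≤ 0
    · rw [if_pos h] at this; nlinarith [sq_nonneg (x₀ - xm)]
    · rw [if_neg h] at this
      have hx0 : 0 < x₀ := lt_of_not_ge h
      nlinarith [sq_nonneg xm]
  · intro x₀ hx₀ heq
    have := key x₀ hx₀
    rw [heq, sub_self] at this
    by_cases h : x₀ ≤ 0
    · rw [if_pos h] at this
      have : (x₀ - xm)^2 = 0 := by nlinarith
      have := pow_eq_zero_iff (n := 2) (by norm_num) |>.mp this
      linarith [sub_eq_zero.mp this]
    · rw [if_neg h] at this
      have hx0 : 0 < x₀ := lt_of_not_ge h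
      exfalso
      have hxmne : xm ≠ 0 := by
        intro hz; rw [hxm] at hz; nlinarith
      nlinarith [sq_nonneg xm, sq_pos_of_ne_zero hxmne]
end
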